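/- arXiv:2305.04696 — 2 statements merged into one kernel-verified Lean document; each statement's English description precedes it below -/
import Mathlib

section
/- Let v1 ≥ v2 > 0. If the strategy profile (X, Y) is a Nash equilibrium of the two-player all-pay auction with valuations (v1, v2), then (X, Y) is a Nash equilibrium of the discrete General Lotto game Γ(E(X), E(Y)). -/
open scoped BigOperators

/-- A (mixed) strategy: a probability distribution on the nonnegative
integers with finite expectation. -/
structure Strategy where
  p : ℕ → ℝ
  nonneg : ∀ n, 0 ≤ p n
  total : HasSum p 1
  finExp : Summable fun n : ℕ => (n : ℝ) * p n

namespace Strategy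

/-- Expectation of a strategy. -/
noncomputable def exp (ξ : Strategy) : ℝ := ∑' n : ℕ, (n : ℝ) * ξ.p n

end Strategy

/-- Probability that an observation from `ξ` strictly exceeds an independent
observation from `η`. -/
noncomputable def prGT (ξ η : Strategy) : ℝ :=
  ∑' n, ξ.p n * ∑ k ∈ Finset.range n, η.p k

/-- Probability that independent observations from `ξ` and `η` are equal. -/
noncomputable def prEq (ξ η : Strategy) : ℝ := ∑' n, ξ.p n * η.p n

/-- Expected all-pay auction payoff of a player with valuation `v` playing `ξ`
against `η`:  `v·Pr(X > Y) + (v/2)·Pr(X = Y) − E(X)`. -/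
noncomputable def payoff (v : ℝ) (ξ η : Strategy) : ℝ :=
  v * prGT ξ η + v / 2 * prEq ξ η - ξ.exp

/-- Nash equilibrium of the two-player all-pay auction with valuations `(v1, v2)`. -/
def IsNashAPA (v1 v2 : ℝ) (X Y : Strategy) : Prop :=
  (∀ X' : Strategy, payoff v1 X' Y ≤ payoff v1 X Y) ∧
  (∀ Y' : Strategy, payoff v2 Y' X ≤ payoff v2 Y X)

/-- `H(ξ, η) = Pr(X > Y) − Pr(X < Y)`. -/
noncomputable def Hval (ξ η : Strategy) : ℝ := prGT ξ η - prGT η ξ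

/-- Nash equilibrium of the discrete General Lotto game `Γ(b1, b2)`. -/
def IsNashLotto (b1 b2 : ℝ) (X Y : Strategy) : Prop :=
  X.exp = b1 ∧ Y.exp = b2 ∧
  (∀ X' : Strategy, X'.exp = b1 → Hval X' Y ≤ Hval X Y) ∧
  (∀ Y' : Strategy, Y'.exp = b2 → Hval Y' X ≤ Hval Y X)

/-- `U_O^m`: uniform distribution on the odd numbers `{1, 3, …, 2m−1}` (as a pmf). -/
noncomputable def UO (m : ℕ) : ℕ → ℝ := fun n =>
  if Odd n ∧ n < 2 * m then (m : ℝ)⁻¹ else 0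

/-- `U_E^m`: uniform distribution on the even numbers `{0, 2, …, 2m}` (as a pmf). -/
noncomputable def UE (m : ℕ) : ℕ → ℝ := fun n =>
  if Even n ∧ n ≤ 2 * m then ((m : ℝ) + 1)⁻¹ else 0

/-- `U_{O↑1}^m`: uniform distribution on the even numbers `{2, 4, …, 2m−2}` (as a pmf). -/
noncomputable def UOup (m : ℕ) : ℕ → ℝ := fun n =>
  if Even n ∧ 0 < n ∧ n ≤ 2 * m - 2 then ((m : ℝ) - 1)⁻¹ else 0

/-- `δ_j`: the point mass at `j` (as a pmf). -/
noncomputable def deltaFn (j : ℕ) : ℕ → ℝ := fun n => if n = j then 1 else 0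

/-- `W_j^m = (1/(2m))·δ_0 + Σ_{i=1}^{j−1}(1/m)·δ_{2i} + (1/(2m))·δ_{2j}
      + Σ_{i=j+1}^{m}(1/m)·δ_{2i−1}` (as a pmf). -/
noncomputable def Wfn (j m : ℕ) : ℕ → ℝ := fun n =>
  if n = 0 ∨ n = 2 * j then (2 * (m : ℝ))⁻¹
  else if Even n ∧ n < 2 * j then (m : ℝ)⁻¹
  else if Odd n ∧ 2 * j < n ∧ n < 2 * m then (m : ℝ)⁻¹
  else 0

/-- `V_j^m = Σ_{i=1}^{j−1}(2/(2m+1))·δ_{2i−1} + (1/(2m+1))·δ_{2j−1}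
      + Σ_{i=j}^{m}(2/(2m+1))·δ_{2i}` (as a pmf). -/
noncomputable def Vfn (j m : ℕ) : ℕ → ℝ := fun n =>
  if n = 2 * j - 1 then (2 * (m : ℝ) + 1)⁻¹
  else if Odd n ∧ n < 2 * j - 1 then 2 * (2 * (m : ℝ) + 1)⁻¹
  else if Even n ∧ 2 * j ≤ n ∧ n ≤ 2 * m then 2 * (2 * (m : ℝ) + 1)⁻¹
  else 0

section Aux

variable (ξ η : Strategy)

private lemma summable_F : Summable (fun p : ℕ × ℕ => ξ.p p.1 * η.p p.2) :=
  ξ.total.summable.mul_of_nonneg η.total.summable ξ.nonneg η.nonneg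

private lemma summable_ite (c : ℕ × ℕ → Prop) [DecidablePred c] :
    Summable (fun p : ℕ × ℕ => if c p then ξ.p p.1 * η.p p.2 else 0) := by
  apply Summable.of_nonneg_of_le _ _ (summable_F ξ η)
  · intro p
    by_cases h : c p <;> simp [h, mul_nonneg (ξ.nonneg _) (η.nonneg _)]
  · intro p
    by_cases h : c p <;> simp [h, mul_nonneg (ξ.nonneg _) (η.nonneg _)]

private lemma summable_inner (b : ℕ) (c : ℕ → Prop) [DecidablePred c] :
    Summable fun k => if c k then ξ.p b * η.p k else 0 := by
  apply Summable.of_nonneg_of_le _ _ (η.total.summable.mul_left (ξ.p b))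
  · intro k
    by_cases h : c k <;> simp [h, mul_nonneg (ξ.nonneg _) (η.nonneg _)]
  · intro k
    by_cases h : c k <;> simp [h, mul_nonneg (ξ.nonneg _) (η.nonneg _)]

private lemma tsum_gt :
    ∑' p : ℕ × ℕ, (if p.2 < p.1 then ξ.p p.1 * η.p p.2 else 0) = prGT ξ η := by
  rw [Summable.tsum_prod' (summable_ite ξ η (fun p => p.2 < p.1))
    (fun b => summable_inner ξ η b (fun k => k < b))]
  unfold prGT
  refine tsum_congr fun n => ?_
  have : ∑' k : ℕ, (if k < n then ξ.p n * η.p k else 0)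
      = ∑ k ∈ Finset.range n, (if k < n then ξ.p n * η.p k else 0) := by
    apply tsum_eq_sum
    intro k hk
    simp only [Finset.mem_range] at hk
    simp [hk]
  rw [this, Finset.mul_sum]
  exact Finset.sum_congr rfl fun k hk => by
    simp [Finset.mem_range.mp hk]

private lemma tsum_eq' :
    ∑' p : ℕ × ℕ, (if p.1 = p.2 then ξ.p p.1 * η.p p.2 else 0) = prEq ξ η := by
  rw [Summable.tsum_prod' (summable_ite ξ η (fun p => p.1 = p.2))
    (fun b => summable_inner ξ η b (fun k => b = k))]
  unfold prEq
  refine tsum_congr fun n => ?_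
  rw [tsum_eq_single n (fun k hk => by simp [(Ne.symm hk)])]
  simp

private lemma key_identity : prGT ξ η + prGT η ξ + prEq ξ η = 1 := by
  have hF : HasSum (fun p : ℕ × ℕ => ξ.p p.1 * η.p p.2) 1 := by
    have := ξ.total.mul η.total (summable_F ξ η)
    simpa using this
  have h1 := summable_ite ξ η (fun p => p.2 < p.1)
  have h2 := summable_ite ξ η (fun p => p.1 < p.2)
  have h3 := summable_ite ξ η (fun p => p.1 = p.2)
  have hsplit : (fun p : ℕ × ℕ => ξ.p p.1 * η.p p.2)
      = (fun p : ℕ × ℕ => (if p.2 < p.1 then ξ.p p.1 * η.p p.2 else 0)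
        + ((if p.1 < p.2 then ξ.p p.1 * η.p p.2 else 0)
          + (if p.1 = p.2 then ξ.p p.1 * η.p p.2 else 0))) := by
    funext p
    rcases lt_trichotomy p.1 p.2 with h | h | h
    · simp [h, not_lt_of_gt h, ne_of_lt h]
    · simp [h, lt_irrefl]
    · simp [h, not_lt_of_gt h, (ne_of_lt h).symm]
  have htot : prGT ξ η + (∑' p : ℕ × ℕ, (if p.1 < p.2 then ξ.p p.1 * η.p p.2 else 0))
      + prEq ξ η = 1 := by
    have := hF.tsum_eq
    rw [hsplit] at this
    rw [Summable.tsum_add h1 (h2.add h3), Summable.tsum_add h2 h3, tsum_gt, tsum_eq'] at this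
    linarith
  have hswap : (∑' p : ℕ × ℕ, (if p.1 < p.2 then ξ.p p.1 * η.p p.2 else 0))
      = prGT η ξ := by
    rw [← (Equiv.prodComm ℕ ℕ).tsum_eq
      (fun p : ℕ × ℕ => if p.1 < p.2 then ξ.p p.1 * η.p p.2 else 0)]
    simp only [Equiv.prodComm_apply, Prod.fst_swap, Prod.snd_swap]
    have := tsum_gt η ξ
    rw [← this]
    exact tsum_congr fun p => by
      by_cases h : p.2 < p.1 <;> simp [h, mul_comm]
  linarith [htot, hswap]

private lemma hval_eq : Hval ξ η = 2 * prGT ξ η + prEq ξ η - 1 := by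
  have := key_identity ξ η
  unfold Hval
  linarith

end Aux

/-- A Nash equilibrium of the all-pay auction is a Nash equilibrium
of the discrete General Lotto game `Γ(E(X), E(Y))`. -/
theorem allpay_ne_is_lotto_ne (v1 v2 : ℝ) (hv2 : 0 < v2) (hv12 : v2 ≤ v1)
    (X Y : Strategy) (h : IsNashAPA v1 v2 X Y) :
    IsNashLotto X.exp Y.exp X Y := by
  obtain ⟨hX, hY⟩ := h
  have hv1 : 0 < v1 := lt_of_lt_of_le hv2 hv12
  refine ⟨rfl, rfl, ?_, ?_⟩
  · intro X' hX'
    have hp := hX X'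
    unfold payoff at hp
    rw [hX'] at hp
    rw [hval_eq X' Y, hval_eq X Y]
    have hm : v1 * (prGT X' Y + prEq X' Y / 2) ≤ v1 * (prGT X Y + prEq X Y / 2) := by
      ring_nf
      ring_nf at hp
      linarith
    have := le_of_mul_le_mul_left hm hv1
    linarith
  · intro Y' hY'
    have hp := hY Y'
    unfold payoff at hp
    rw [hY'] at hp
    rw [hval_eq Y' X, hval_eq Y X]
    have hm : v2 * (prGT Y' X + prEq Y' X / 2) ≤ v2 * (prGT Y X + prEq Y X / 2) := by
      ring_nf
      ring_nf at hp
      linarith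
    have := le_of_mul_le_mul_left hm hv2
    linarith
end

section
/- Let v1 ≥ v2 > 2 with v2/2 not an integer and ⌊v1/2⌋ = ⌊v2/2⌋, and set m = ⌊v2/2⌋. A strategy profile (X, Y) is a Nash equilibrium of the two-player all-pay auction with valuations (v1, v2) if and only if X = λ·U_O^m + (1−λ)·U_E^m and Y = κ·U_O^m + (1−κ)·U_E^m, where κ = (⌊v1/2⌋/(v1/2))·(⌈v1/2⌉ − v1/2) and λ = (⌊v2/2⌋/(v2/2))·(⌈v2/2⌉ − v2/2). The equilibrium payoffs are P_{v1}(X, Y) = v1/2 − ⌊v2/2⌋ and P_{v2}(Y, X) = v2/2 − ⌊v2/2⌋. -/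
open scoped BigOperators

/-!
Scaling player 1's payoff by `v2` and player 2's by `v1`, the two payoffs add up to a sum of terms
each depending on one strategy only, because `Pr(X > Y) + Pr(Y > X) + Pr(X = Y) = 1`. So the
equilibria are the saddle points of a single function, and any two of them can be interchanged.

For `m < v / 2 < m + 1`, the strategy putting `1 - 2m / v` on each even and `2(m + 1) / v - 1` on
each odd number in `{0, …, 2m}` has consecutive probabilities summing to `2 / v`. Against it, this
makes every bid in `{0, …, 2m}` worth exactly `v / 2 - m` to a bidder with valuation `v`, and every
higher bid worth less. The two strategies built in this way for `v2` and `v1` form an equilibrium.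
For any equilibrium `(X, Y)`, interchanging shows that `X` is a best response to the strategy built
for `v1`, so `X` never bids above `2m`. It also shows that this strategy, whose support is all of
`{0, …, 2m}`, is a best response to `X`, so all bids up to `2m` earn the same against `X`. These two
facts force `X` to be the strategy built for `v2`.
-/

open Finset Filter Topology

def IsSaddlePoint {α β γ : Type*} [Preorder γ] (f : α → β → γ) (a : α) (b : β) : Prop :=
  (∀ a', f a' b ≤ f a b) ∧ ∀ b', f a b ≤ f a b'

lemma IsSaddlePoint.interchange {α β γ : Type*} [Preorder γ] {f : α → β → γ} {a a' : α}
    {b b' : β} (h : IsSaddlePoint f a b) (h' : IsSaddlePoint f a' b') : IsSaddlePoint f a b' :=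
  ⟨fun a'' => (h'.1 a'').trans <| (h'.2 b).trans <| (h.1 a').trans (h.2 b'),
    fun b'' => (h'.1 a).trans <| (h'.2 b).trans <| (h.1 a').trans (h.2 b'')⟩

namespace Strategy

noncomputable def probLT (ξ : Strategy) (n : ℕ) : ℝ := ∑ k ∈ range n, ξ.p k

lemma probLT_succ (ξ : Strategy) (n : ℕ) : ξ.probLT (n + 1) = ξ.probLT n + ξ.p n :=
  sum_range_succ _ n

lemma probLT_nonneg (ξ : Strategy) (n : ℕ) : 0 ≤ ξ.probLT n :=
  sum_nonneg fun k _ => ξ.nonneg k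

lemma probLT_le_one (ξ : Strategy) (n : ℕ) : ξ.probLT n ≤ 1 :=
  sum_le_hasSum _ (fun k _ => ξ.nonneg k) ξ.total

lemma p_le_one (ξ : Strategy) (n : ℕ) : ξ.p n ≤ 1 :=
  le_hasSum ξ.total n fun k _ => ξ.nonneg k

lemma tendsto_probLT (ξ : Strategy) : Tendsto ξ.probLT atTop (𝓝 1) :=
  ξ.total.tendsto_sum_nat

lemma probLT_eq_one {ξ : Strategy} {N : ℕ} (h : ∀ n, N ≤ n → ξ.p n = 0) : ξ.probLT N = 1 :=
  (hasSum_sum_of_ne_finset_zero fun n hn => h n (by simpa using hn)).unique ξ.total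

lemma summable_p_mul {ξ : Strategy} {f : ℕ → ℝ} (h0 : ∀ n, 0 ≤ f n) (h1 : ∀ n, f n ≤ 1) :
    Summable fun n => ξ.p n * f n :=
  ξ.total.summable.of_nonneg_of_le (fun n => mul_nonneg (ξ.nonneg n) (h0 n))
    fun n => mul_le_of_le_one_right (ξ.nonneg n) (h1 n)

noncomputable def ofRange (p : ℕ → ℝ) (N : ℕ) (nonneg : ∀ n, 0 ≤ p n)
    (support : ∀ n, N ≤ n → p n = 0) (sum_eq : ∑ k ∈ range N, p k = 1) : Strategy where
  p := p
  nonneg := nonneg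
  total := sum_eq ▸ hasSum_sum_of_ne_finset_zero fun n hn => support n (by simpa using hn)
  finExp := summable_of_ne_finset_zero (s := range N) fun n hn => by
    rw [support n (by simpa using hn), mul_zero]

noncomputable def delta (j : ℕ) : Strategy :=
  ofRange (deltaFn j) (j + 1) (fun n => by unfold deltaFn; positivity)
    (fun n hn => if_neg (by omega)) (by simp [deltaFn])

end Strategy

open Strategy

noncomputable def bidPayoff (v : ℝ) (η : Strategy) (n : ℕ) : ℝ :=
  v * (η.probLT n + η.p n / 2) - n

lemma hasSum_payoff (v : ℝ) (ξ η : Strategy) :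
    HasSum (fun n => ξ.p n * bidPayoff v η n) (payoff v ξ η) := by
  have hGT := (summable_p_mul (ξ := ξ) η.probLT_nonneg η.probLT_le_one).hasSum
  have hEq := (summable_p_mul (ξ := ξ) η.nonneg η.p_le_one).hasSum
  have hfun : (fun n => ξ.p n * bidPayoff v η n) =
      fun n => v * (ξ.p n * η.probLT n) + v / 2 * (ξ.p n * η.p n) - n * ξ.p n := by
    funext n
    rw [bidPayoff]
    ring
  rw [hfun]
  exact ((hGT.mul_left v).add (hEq.mul_left (v / 2))).sub ξ.finExp.hasSum

lemma payoff_delta (v : ℝ) (j : ℕ) (η : Strategy) : payoff v (delta j) η = bidPayoff v η j := by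
  refine (hasSum_payoff v (delta j) η).unique ?_
  convert hasSum_single j fun n hn => ?_ using 1
  · simp [delta, ofRange, deltaFn]
  · simp [delta, ofRange, deltaFn, hn]

lemma payoff_le_of_forall_bidPayoff_le {v A : ℝ} {ξ η : Strategy}
    (h : ∀ n, bidPayoff v η n ≤ A) : payoff v ξ η ≤ A := by
  simpa using hasSum_le (fun n => mul_le_mul_of_nonneg_left (h n) (ξ.nonneg n))
    (hasSum_payoff v ξ η) (ξ.total.mul_right A)

lemma bidPayoff_le_payoff {v : ℝ} {ξ η : Strategy} (h : ∀ ξ', payoff v ξ' η ≤ payoff v ξ η)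
    (n : ℕ) : bidPayoff v η n ≤ payoff v ξ η :=
  payoff_delta v n η ▸ h (delta n)

lemma bidPayoff_eq_payoff_of_pos {v : ℝ} {ξ η : Strategy}
    (hle : ∀ n, bidPayoff v η n ≤ payoff v ξ η) {n : ℕ} (hpos : 0 < ξ.p n) :
    bidPayoff v η n = payoff v ξ η := by
  refine (hle n).antisymm (not_lt.1 fun hlt => ?_)
  have := hasSum_lt (fun k => mul_le_mul_of_nonneg_left (hle k) (ξ.nonneg k))
    (mul_lt_mul_of_pos_left hlt hpos) (hasSum_payoff v ξ η) (ξ.total.mul_right _)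
  simp at this

lemma p_eq_zero_of_bidPayoff_lt {v : ℝ} {ξ η : Strategy}
    (hle : ∀ n, bidPayoff v η n ≤ payoff v ξ η) {n : ℕ} (hlt : bidPayoff v η n < payoff v ξ η) :
    ξ.p n = 0 :=
  (ξ.nonneg n).eq_or_lt.elim Eq.symm fun hpos =>
    absurd (bidPayoff_eq_payoff_of_pos hle hpos) hlt.ne

lemma bidPayoff_zero (v : ℝ) (η : Strategy) : bidPayoff v η 0 = v / 2 * η.p 0 := by
  simp only [bidPayoff, probLT, range_zero, sum_empty, zero_add, CharP.cast_eq_zero, sub_zero]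
  ring

lemma bidPayoff_succ_sub (v : ℝ) (η : Strategy) (n : ℕ) :
    bidPayoff v η (n + 1) - bidPayoff v η n = v / 2 * (η.p n + η.p (n + 1)) - 1 := by
  rw [bidPayoff, bidPayoff, probLT_succ]
  push_cast
  ring

lemma bidPayoff_eq_sub_of_le {v : ℝ} {η : Strategy} {N n : ℕ} (hη : ∀ k, N ≤ k → η.p k = 0)
    (hn : N ≤ n) : bidPayoff v η n = v - n := by
  rw [bidPayoff, probLT_eq_one fun k hk => hη k (hn.trans hk), hη n hn]
  ring

lemma bidPayoff_eq_bidPayoff_zero_iff {v : ℝ} (hv : v ≠ 0) {η : Strategy} {N : ℕ} :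
    (∀ n ≤ N, bidPayoff v η n = bidPayoff v η 0) ↔
      ∀ n, n + 1 ≤ N → η.p n + η.p (n + 1) = 2 / v := by
  constructor
  · intro h n hn
    have := bidPayoff_succ_sub v η n
    rw [h (n + 1) hn, h n (by omega), sub_self] at this
    rw [eq_div_iff hv]
    linear_combination (-2) * this
  · intro h n
    induction n with
    | zero => exact fun _ => rfl
    | succ n ih =>
      intro hn
      have := bidPayoff_succ_sub v η n
      rw [h n hn, show v / 2 * (2 / v) = 1 by field_simp, sub_self] at this
      linarith [ih (by omega)]

lemma prGT_add_prGT_add_prEq (ξ η : Strategy) : prGT ξ η + prGT η ξ + prEq ξ η = 1 := by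
  have hsum := (((summable_p_mul (ξ := ξ) η.probLT_nonneg η.probLT_le_one).hasSum.add
    (summable_p_mul (ξ := η) ξ.probLT_nonneg ξ.probLT_le_one).hasSum).add
    (summable_p_mul (ξ := ξ) η.nonneg η.p_le_one).hasSum)
  have hpartial : ∀ N, ∑ n ∈ range N,
      (ξ.p n * η.probLT n + η.p n * ξ.probLT n + ξ.p n * η.p n) = ξ.probLT N * η.probLT N := by
    intro N
    induction N with
    | zero => simp [probLT]
    | succ N ih => rw [sum_range_succ, ih, probLT_succ, probLT_succ]; ring
  refine tendsto_nhds_unique hsum.tendsto_sum_nat ?_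
  simp_rw [hpartial]
  simpa using ξ.tendsto_probLT.mul η.tendsto_probLT

lemma payoff_eq_Hval (v : ℝ) (ξ η : Strategy) :
    payoff v ξ η = v / 2 * (1 + Hval ξ η) - ξ.exp := by
  have := prGT_add_prGT_add_prEq ξ η
  rw [payoff, Hval, show prEq ξ η = 1 - prGT ξ η - prGT η ξ by linarith]
  ring

noncomputable def zeroSumPayoff (v1 v2 : ℝ) (ξ η : Strategy) : ℝ :=
  v1 * v2 / 2 * Hval ξ η - v2 * ξ.exp + v1 * η.exp

lemma mul_payoff_eq_zeroSumPayoff_left (v1 v2 : ℝ) (ξ η : Strategy) :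
    v2 * payoff v1 ξ η = v1 * v2 / 2 + zeroSumPayoff v1 v2 ξ η - v1 * η.exp := by
  rw [payoff_eq_Hval, zeroSumPayoff]
  ring

lemma mul_payoff_eq_zeroSumPayoff_right (v1 v2 : ℝ) (ξ η : Strategy) :
    v1 * payoff v2 η ξ = v1 * v2 / 2 - zeroSumPayoff v1 v2 ξ η - v2 * ξ.exp := by
  rw [payoff_eq_Hval, zeroSumPayoff, Hval, Hval]
  ring

lemma isNashAPA_iff_isSaddlePoint {v1 v2 : ℝ} (hv1 : 0 < v1) (hv2 : 0 < v2) {X Y : Strategy} :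
    IsNashAPA v1 v2 X Y ↔ IsSaddlePoint (zeroSumPayoff v1 v2) X Y := by
  refine and_congr (forall_congr' fun X' => ?_) (forall_congr' fun Y' => ?_)
  · rw [← mul_le_mul_iff_of_pos_left hv2, mul_payoff_eq_zeroSumPayoff_left,
      mul_payoff_eq_zeroSumPayoff_left]
    constructor <;> intro <;> linarith
  · rw [← mul_le_mul_iff_of_pos_left hv1, mul_payoff_eq_zeroSumPayoff_right,
      mul_payoff_eq_zeroSumPayoff_right]
    constructor <;> intro <;> linarith

lemma IsNashAPA.interchange {v1 v2 : ℝ} (hv1 : 0 < v1) (hv2 : 0 < v2) {X Y X' Y' : Strategy}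
    (h : IsNashAPA v1 v2 X Y) (h' : IsNashAPA v1 v2 X' Y') : IsNashAPA v1 v2 X Y' := by
  rw [isNashAPA_iff_isSaddlePoint hv1 hv2] at h h' ⊢
  exact h.interchange h'

lemma isNashAPA_comm {v1 v2 : ℝ} {X Y : Strategy} : IsNashAPA v1 v2 X Y ↔ IsNashAPA v2 v1 Y X :=
  and_comm

lemma sum_range_two_mul_add_one_of_add_succ {g : ℕ → ℝ} {c : ℝ} {m : ℕ}
    (h : ∀ n, n + 1 ≤ 2 * m → g n + g (n + 1) = c) :
    ∑ k ∈ range (2 * m + 1), g k = g 0 + m * c := by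
  induction m with
  | zero => simp
  | succ m ih =>
    rw [show 2 * (m + 1) + 1 = 2 * m + 1 + 1 + 1 by ring, sum_range_succ, sum_range_succ,
      add_assoc, h (2 * m + 1) (by omega), ih fun n hn => h n (by omega)]
    push_cast
    ring

lemma eq_of_add_succ_eq {g g' : ℕ → ℝ} {N : ℕ} (h0 : g 0 = g' 0)
    (h : ∀ n, n + 1 ≤ N → g n + g (n + 1) = g' n + g' (n + 1)) : ∀ n ≤ N, g n = g' n := by
  intro n
  induction n with
  | zero => exact fun _ => h0
  | succ n ih =>
    intro hn
    have := h n hn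
    rw [ih (by omega)] at this
    linarith

lemma pos_of_natCast_lt_half {v : ℝ} {m : ℕ} (h : (m : ℝ) < v / 2) : 0 < v := by
  linarith [(m.cast_nonneg : (0 : ℝ) ≤ m)]

noncomputable def equilibriumPmf (v : ℝ) (m n : ℕ) : ℝ :=
  if n ≤ 2 * m then (if Even n then 1 - 2 * m / v else 2 * (m + 1) / v - 1) else 0

section equilibriumPmf

variable {v : ℝ} {m n : ℕ}

lemma equilibriumPmf_zero : equilibriumPmf v m 0 = 1 - 2 * m / v := by
  simp [equilibriumPmf]

lemma equilibriumPmf_of_lt (h : 2 * m < n) : equilibriumPmf v m n = 0 :=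
  if_neg (by omega)

lemma equilibriumPmf_add_succ (h : n + 1 ≤ 2 * m) :
    equilibriumPmf v m n + equilibriumPmf v m (n + 1) = 2 / v := by
  rcases Nat.even_or_odd n with hn | hn
  · simp only [equilibriumPmf, show n ≤ 2 * m by omega, h, hn, Nat.even_add_one,
      not_true_eq_false, ↓reduceIte]
    ring
  · simp only [equilibriumPmf, show n ≤ 2 * m by omega, h, Nat.not_even_iff_odd.2 hn,
      Nat.even_add_one, not_false_eq_true, ↓reduceIte]
    ring

lemma sum_range_equilibriumPmf : ∑ k ∈ range (2 * m + 1), equilibriumPmf v m k = 1 := by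
  rw [sum_range_two_mul_add_one_of_add_succ fun _ => equilibriumPmf_add_succ, equilibriumPmf_zero]
  ring

lemma equilibriumPmf_pos (h1 : (m : ℝ) < v / 2) (h2 : v / 2 < m + 1) (hn : n ≤ 2 * m) :
    0 < equilibriumPmf v m n := by
  have hv := pos_of_natCast_lt_half h1
  rw [equilibriumPmf, if_pos hn]
  split_ifs
  · rw [sub_pos, div_lt_one hv]
    linarith
  · rw [sub_pos, one_lt_div hv]
    linarith

lemma equilibriumPmf_nonneg (h1 : (m : ℝ) < v / 2) (h2 : v / 2 < m + 1) (n : ℕ) :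
    0 ≤ equilibriumPmf v m n := by
  rcases le_or_gt n (2 * m) with hn | hn
  · exact (equilibriumPmf_pos h1 h2 hn).le
  · exact (equilibriumPmf_of_lt hn).ge

end equilibriumPmf

noncomputable def equilibrium (v : ℝ) (m : ℕ) (h1 : (m : ℝ) < v / 2) (h2 : v / 2 < m + 1) :
    Strategy :=
  ofRange (equilibriumPmf v m) (2 * m + 1) (equilibriumPmf_nonneg h1 h2)
    (fun _ hn => equilibriumPmf_of_lt (by omega)) sum_range_equilibriumPmf

lemma mixture_eq_equilibriumPmf {v : ℝ} {m : ℕ} (h1 : (m : ℝ) < v / 2) (h2 : v / 2 < m + 1)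
    (n : ℕ) :
    ((⌊v / 2⌋ : ℝ) / (v / 2)) * ((⌈v / 2⌉ : ℝ) - v / 2) * UO m n +
      (1 - ((⌊v / 2⌋ : ℝ) / (v / 2)) * ((⌈v / 2⌉ : ℝ) - v / 2)) * UE m n =
      equilibriumPmf v m n := by
  have hfloor : ⌊v / 2⌋ = m := Int.floor_eq_iff.2 ⟨by push_cast; linarith, by push_cast; linarith⟩
  have hceil : ⌈v / 2⌉ = m + 1 := Int.ceil_eq_iff.2 ⟨by push_cast; linarith, by push_cast; linarith⟩
  have hv := (pos_of_natCast_lt_half h1).ne'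
  rw [hfloor, hceil, UO, UE, equilibriumPmf]
  push_cast
  rcases Nat.even_or_odd n with hn | hn
  · by_cases hle : n ≤ 2 * m
    · simp only [Nat.not_odd_iff_even.2 hn, hn, hle, false_and, and_self, ↓reduceIte, mul_zero,
        zero_add]
      field_simp
      ring
    · simp [Nat.not_odd_iff_even.2 hn, hle]
  · by_cases hlt : n < 2 * m
    · have hm : (m : ℝ) ≠ 0 := Nat.cast_ne_zero.2 (by omega)
      simp only [Nat.not_even_iff_odd.2 hn, hn, hlt, hlt.le, and_self, and_true, ↓reduceIte,
        mul_zero, add_zero]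
      field_simp
    · have hle : ¬ n ≤ 2 * m := fun hle => hlt (hle.lt_of_ne fun h => by
        rw [h] at hn; exact Nat.not_even_iff_odd.2 hn (even_two_mul m))
      simp [Nat.not_even_iff_odd.2 hn, hlt, hle]

section equilibrium

variable {v : ℝ} {m n : ℕ} {ξ η : Strategy}

lemma bidPayoff_equilibrium_of_le (h1 : (m : ℝ) < v / 2) (hη : η.p = equilibriumPmf v m)
    (hn : n ≤ 2 * m) : bidPayoff v η n = v / 2 - m := by
  have hv := (pos_of_natCast_lt_half h1).ne'
  have hpair : ∀ k, k + 1 ≤ 2 * m → η.p k + η.p (k + 1) = 2 / v := fun k hk => by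
    rw [hη]
    exact equilibriumPmf_add_succ hk
  rw [(bidPayoff_eq_bidPayoff_zero_iff hv).2 hpair n hn, bidPayoff_zero, hη, equilibriumPmf_zero]
  field_simp

lemma bidPayoff_equilibrium_lt (h2 : v / 2 < m + 1) (hη : η.p = equilibriumPmf v m)
    (hn : 2 * m < n) : bidPayoff v η n < v / 2 - m := by
  rw [bidPayoff_eq_sub_of_le (N := 2 * m + 1) (fun k hk => hη ▸ equilibriumPmf_of_lt (by omega)) hn]
  have : (2 * m + 1 : ℝ) ≤ n := by exact_mod_cast hn
  linarith

lemma bidPayoff_equilibrium_le (h1 : (m : ℝ) < v / 2) (h2 : v / 2 < m + 1)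
    (hη : η.p = equilibriumPmf v m) (n : ℕ) : bidPayoff v η n ≤ v / 2 - m := by
  rcases le_or_gt n (2 * m) with hn | hn
  · exact (bidPayoff_equilibrium_of_le h1 hη hn).le
  · exact (bidPayoff_equilibrium_lt h2 hη hn).le

lemma payoff_equilibrium (h1 : (m : ℝ) < v / 2) (hη : η.p = equilibriumPmf v m)
    (hξ : ∀ n, 2 * m < n → ξ.p n = 0) : payoff v ξ η = v / 2 - m := by
  have hfun : (fun n => ξ.p n * bidPayoff v η n) = fun n => ξ.p n * (v / 2 - m) := by
    funext n
    rcases le_or_gt n (2 * m) with hn | hn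
    · rw [bidPayoff_equilibrium_of_le h1 hη hn]
    · rw [hξ n hn, zero_mul, zero_mul]
  have := hasSum_payoff v ξ η
  rw [hfun] at this
  simpa using this.unique (ξ.total.mul_right _)

lemma payoff_le_payoff_equilibrium (h1 : (m : ℝ) < v / 2) (h2 : v / 2 < m + 1)
    (hη : η.p = equilibriumPmf v m) (hξ : ∀ n, 2 * m < n → ξ.p n = 0) (ξ' : Strategy) :
    payoff v ξ' η ≤ payoff v ξ η := by
  rw [payoff_equilibrium h1 hη hξ]
  exact payoff_le_of_forall_bidPayoff_le (bidPayoff_equilibrium_le h1 h2 hη)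

lemma eq_equilibriumPmf_of_bidPayoff_eq (hv : v ≠ 0) (hη : ∀ n, 2 * m < n → η.p n = 0)
    (hconst : ∀ n ≤ 2 * m, bidPayoff v η n = bidPayoff v η 0) : η.p = equilibriumPmf v m := by
  have hpair := (bidPayoff_eq_bidPayoff_zero_iff hv).1 hconst
  have h0 : η.p 0 = 1 - 2 * m / v := by
    have htotal := probLT_eq_one (N := 2 * m + 1) fun n hn => hη n (by omega)
    rw [probLT, sum_range_two_mul_add_one_of_add_succ hpair] at htotal
    linarith [show (m : ℝ) * (2 / v) = 2 * m / v by ring]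
  funext n
  rcases le_or_gt n (2 * m) with hn | hn
  · exact eq_of_add_succ_eq (h0.trans equilibriumPmf_zero.symm)
      (fun k hk => (hpair k hk).trans (equilibriumPmf_add_succ hk).symm) n hn
  · rw [hη n hn, equilibriumPmf_of_lt hn]

end equilibrium

section closeValuations

variable {v1 v2 : ℝ} {m : ℕ} {X Y : Strategy}

lemma isNashAPA_of_eq_equilibriumPmf (h1lo : (m : ℝ) < v1 / 2) (h1hi : v1 / 2 < m + 1)
    (h2lo : (m : ℝ) < v2 / 2) (h2hi : v2 / 2 < m + 1)
    (hX : X.p = equilibriumPmf v2 m) (hY : Y.p = equilibriumPmf v1 m) : IsNashAPA v1 v2 X Y :=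
  ⟨payoff_le_payoff_equilibrium h1lo h1hi hY fun _ hn => hX ▸ equilibriumPmf_of_lt hn,
    payoff_le_payoff_equilibrium h2lo h2hi hX fun _ hn => hY ▸ equilibriumPmf_of_lt hn⟩

lemma eq_equilibriumPmf_of_isNashAPA (h1lo : (m : ℝ) < v1 / 2) (h1hi : v1 / 2 < m + 1)
    (h2lo : (m : ℝ) < v2 / 2) (hY : Y.p = equilibriumPmf v1 m) (h : IsNashAPA v1 v2 X Y) :
    X.p = equilibriumPmf v2 m := by
  have hpayoff : payoff v1 X Y = v1 / 2 - m :=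
    (payoff_le_of_forall_bidPayoff_le (bidPayoff_equilibrium_le h1lo h1hi hY)).antisymm
      ((bidPayoff_equilibrium_of_le h1lo hY (Nat.zero_le _)).symm.trans_le
        (bidPayoff_le_payoff h.1 0))
  have hsupport : ∀ n, 2 * m < n → X.p n = 0 := fun n hn =>
    p_eq_zero_of_bidPayoff_lt (bidPayoff_le_payoff h.1)
      (hpayoff ▸ bidPayoff_equilibrium_lt h1hi hY hn)
  have hconst : ∀ n ≤ 2 * m, bidPayoff v2 X n = payoff v2 Y X := fun n hn =>
    bidPayoff_eq_payoff_of_pos (bidPayoff_le_payoff h.2) (hY ▸ equilibriumPmf_pos h1lo h1hi hn)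
  have hv2 := (pos_of_natCast_lt_half h2lo).ne'
  exact eq_equilibriumPmf_of_bidPayoff_eq hv2 hsupport fun n hn =>
    (hconst n hn).trans (hconst 0 (Nat.zero_le _)).symm

theorem isNashAPA_iff_eq_equilibriumPmf (h1lo : (m : ℝ) < v1 / 2) (h1hi : v1 / 2 < m + 1)
    (h2lo : (m : ℝ) < v2 / 2) (h2hi : v2 / 2 < m + 1) :
    IsNashAPA v1 v2 X Y ↔ X.p = equilibriumPmf v2 m ∧ Y.p = equilibriumPmf v1 m := by
  have hv1 := pos_of_natCast_lt_half h1lo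
  have hv2 := pos_of_natCast_lt_half h2lo
  have he : IsNashAPA v1 v2 (equilibrium v2 m h2lo h2hi) (equilibrium v1 m h1lo h1hi) :=
    isNashAPA_of_eq_equilibriumPmf h1lo h1hi h2lo h2hi rfl rfl
  refine ⟨fun h => ⟨?_, ?_⟩, fun ⟨hX, hY⟩ =>
    isNashAPA_of_eq_equilibriumPmf h1lo h1hi h2lo h2hi hX hY⟩
  · exact eq_equilibriumPmf_of_isNashAPA h1lo h1hi h2lo rfl (h.interchange hv1 hv2 he)
  · exact eq_equilibriumPmf_of_isNashAPA h2lo h2hi h1lo rfl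
      (isNashAPA_comm.1 (he.interchange hv1 hv2 h))

end closeValuations

theorem allpay_equilibria_close_vals_general (v1 v2 : ℝ) (hv : v2 ≤ v1)
    (hnonint : ¬ ∃ k : ℤ, v2 / 2 = (k : ℝ))
    (hfl : ⌊v1 / 2⌋ = ⌊v2 / 2⌋) (m : ℕ) (hm : (m : ℤ) = ⌊v2 / 2⌋)
    (X Y : Strategy) :
    (IsNashAPA v1 v2 X Y ↔
      ((∀ n, X.p n =
          ((⌊v2 / 2⌋ : ℝ) / (v2 / 2)) * ((⌈v2 / 2⌉ : ℝ) - v2 / 2) * UO m n +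
          (1 - ((⌊v2 / 2⌋ : ℝ) / (v2 / 2)) * ((⌈v2 / 2⌉ : ℝ) - v2 / 2)) * UE m n) ∧
       (∀ n, Y.p n =
          ((⌊v1 / 2⌋ : ℝ) / (v1 / 2)) * ((⌈v1 / 2⌉ : ℝ) - v1 / 2) * UO m n +
          (1 - ((⌊v1 / 2⌋ : ℝ) / (v1 / 2)) * ((⌈v1 / 2⌉ : ℝ) - v1 / 2)) * UE m n))) ∧
    (IsNashAPA v1 v2 X Y →
      payoff v1 X Y = v1 / 2 - (⌊v2 / 2⌋ : ℝ) ∧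
      payoff v2 Y X = v2 / 2 - (⌊v2 / 2⌋ : ℝ)) := by
  have hfloor2 : (⌊v2 / 2⌋ : ℝ) = m := by exact_mod_cast hm.symm
  have hfloor1 : (⌊v1 / 2⌋ : ℝ) = m := by exact_mod_cast hfl.trans hm.symm
  have h2lo : (m : ℝ) < v2 / 2 :=
    (hfloor2 ▸ Int.floor_le (v2 / 2)).lt_of_ne fun h => hnonint ⟨m, by rw [← h]; push_cast; rfl⟩
  have h2hi : v2 / 2 < m + 1 := hfloor2 ▸ Int.lt_floor_add_one (v2 / 2)
  have h1lo : (m : ℝ) < v1 / 2 := by linarith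
  have h1hi : v1 / 2 < m + 1 := hfloor1 ▸ Int.lt_floor_add_one (v1 / 2)
  simp only [mixture_eq_equilibriumPmf h1lo h1hi, mixture_eq_equilibriumPmf h2lo h2hi,
    ← funext_iff]
  rw [hfloor2]
  refine ⟨isNashAPA_iff_eq_equilibriumPmf h1lo h1hi h2lo h2hi, fun h => ?_⟩
  obtain ⟨hX, hY⟩ := (isNashAPA_iff_eq_equilibriumPmf h1lo h1hi h2lo h2hi).1 h
  exact ⟨payoff_equilibrium h1lo hY fun _ hn => hX ▸ equilibriumPmf_of_lt hn,
    payoff_equilibrium h2lo hX fun _ hn => hY ▸ equilibriumPmf_of_lt hn⟩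

/-- characterization of equilibria when `v1 ≥ v2 > 2`, `v2/2` is
not an integer and `⌊v1/2⌋ = ⌊v2/2⌋`, with `m = ⌊v2/2⌋`. -/
theorem allpay_equilibria_close_vals (v1 v2 : ℝ) (hv : v2 ≤ v1) (hv2 : 2 < v2)
    (hnonint : ¬ ∃ k : ℤ, v2 / 2 = (k : ℝ))
    (hfl : ⌊v1 / 2⌋ = ⌊v2 / 2⌋) (m : ℕ) (hm : (m : ℤ) = ⌊v2 / 2⌋)
    (X Y : Strategy) :
    (IsNashAPA v1 v2 X Y ↔
      ((∀ n, X.p n =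
          ((⌊v2 / 2⌋ : ℝ) / (v2 / 2)) * ((⌈v2 / 2⌉ : ℝ) - v2 / 2) * UO m n +
          (1 - ((⌊v2 / 2⌋ : ℝ) / (v2 / 2)) * ((⌈v2 / 2⌉ : ℝ) - v2 / 2)) * UE m n) ∧
       (∀ n, Y.p n =
          ((⌊v1 / 2⌋ : ℝ) / (v1 / 2)) * ((⌈v1 / 2⌉ : ℝ) - v1 / 2) * UO m n +
          (1 - ((⌊v1 / 2⌋ : ℝ) / (v1 / 2)) * ((⌈v1 / 2⌉ : ℝ) - v1 / 2)) * UE m n))) ∧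
    (IsNashAPA v1 v2 X Y →
      payoff v1 X Y = v1 / 2 - (⌊v2 / 2⌋ : ℝ) ∧
      payoff v2 Y X = v2 / 2 - (⌊v2 / 2⌋ : ℝ)) :=
  allpay_equilibria_close_vals_general v1 v2 hv hnonint hfl m hm X Y
end
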